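/- arXiv:1509.04538 — 4 statements merged into one kernel-verified Lean document; each statement's English description precedes it below -/
import Mathlib

section
/- Let A be an n×n real matrix with nonzero rows a₁ᵀ,…,aₙᵀ, let b ∈ ℝⁿ, let G be an undirected simple graph on n vertices with Laplacian L, let Pᵢ = I − aᵢaᵢᵀ/(aᵢᵀaᵢ), let P = diag(P₁,…,Pₙ) be the n²×n² block-diagonal matrix and L̄ = L ⊗ Iₙ. If the initial vector 𝒳₀ = (x₁(0),…,xₙ(0)) ∈ (ℝⁿ)ⁿ satisfies aᵢᵀxᵢ(0) = bᵢ for all i, then for every t ∈ ℝ the vector 𝒳(t) = exp(−t·P L̄)·𝒳₀, with blocks x₁(t),…,xₙ(t), satisfies aᵢᵀxᵢ(t) = bᵢ for all i. -/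
/-!
The functional `𝒳 ↦ aᵢᵀxᵢ` is `𝒳 ↦ vᵢᵀ𝒳`, where `vᵢ` places `aᵢ` in the `i`-th block. Since
`aᵢᵀPᵢ = 0`, the row vector `vᵢᵀ` annihilates `P`, hence the generator `-t·P L̄`, so every
positive power of the generator vanishes against it and `vᵢᵀ exp(-t·P L̄) = vᵢᵀ`.
-/

open Matrix
open scoped Kronecker

/-- The orthogonal projection `Pᵢ = I - aᵢaᵢᵀ/(aᵢᵀaᵢ)` onto the hyperplane `{z : aᵢᵀz = 0}`. -/
noncomputable def projMat {n : ℕ} (a : Fin n → ℝ) : Matrix (Fin n) (Fin n) ℝ :=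
  1 - (a ⬝ᵥ a)⁻¹ • vecMulVec a a

/-- The block-diagonal matrix `P = diag(P₁,…,Pₘ)`, acting on `(ℝⁿ)ᵐ ≅ ℝ^{mn}`
(indexed by pairs `(block, coordinate)`). -/
noncomputable def blockP {m n : ℕ} (a : Fin m → Fin n → ℝ) :
    Matrix (Fin m × Fin n) (Fin m × Fin n) ℝ :=
  Matrix.of fun p q => if p.1 = q.1 then projMat (a p.1) p.2 q.2 else 0

theorem mul_exp_eq_self_of_mul_eq_zero {𝔸 : Type*} [NormedRing 𝔸] [NormedAlgebra ℚ 𝔸]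
    [CompleteSpace 𝔸] {x a : 𝔸} (h : x * a = 0) : x * NormedSpace.exp a = x := by
  have hterm : ∀ n ≠ 0, x * ((n.factorial⁻¹ : ℚ) • a ^ n) = 0 := fun n hn => by
    rw [mul_smul_comm, ← Nat.succ_pred_eq_of_ne_zero hn, pow_succ', ← mul_assoc, h, zero_mul,
      smul_zero]
  refine ((NormedSpace.exp_series_hasSum_exp' (𝕂 := ℚ) a).mul_left x).unique ?_
  simpa using hasSum_single 0 hterm

attribute [local instance] Matrix.linftyOpNormedRing Matrix.linftyOpNormedAlgebra in
theorem Matrix.vecMul_exp_eq_self_of_vecMul_eq_zero {m : Type*} [Fintype m] [DecidableEq m]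
    {M : Matrix m m ℝ} {v : m → ℝ} (h : v ᵥ* M = 0) : v ᵥ* NormedSpace.exp M = v := by
  have hrow : replicateRow m v * M = 0 := by rw [← replicateRow_vecMul, h, replicateRow_zero]
  have hexp := mul_exp_eq_self_of_mul_eq_zero hrow
  rw [← replicateRow_vecMul] at hexp
  funext j
  exact congrFun (congrFun hexp j) j

theorem vecMul_projMat_self {n : ℕ} {a : Fin n → ℝ} (ha : a ≠ 0) : a ᵥ* projMat a = 0 := by
  rw [projMat, vecMul_sub, vecMul_one, vecMul_smul, vecMul_vecMulVec, smul_smul,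
    inv_mul_cancel₀ (dotProduct_self_eq_zero.not.mpr ha), one_smul, sub_self]

section BlockVec

variable {ι κ R : Type*} [DecidableEq ι]

def blockVec [Zero R] (i : ι) (w : κ → R) : ι × κ → R :=
  fun p => if p.1 = i then w p.2 else 0

@[simp]
theorem blockVec_zero [Zero R] (i : ι) : blockVec i (0 : κ → R) = 0 := by
  funext p
  simp [blockVec]

theorem blockVec_dotProduct [Fintype ι] [Fintype κ] [NonUnitalNonAssocSemiring R] (i : ι)
    (w : κ → R) (X : ι × κ → R) : blockVec i w ⬝ᵥ X = w ⬝ᵥ fun k => X (i, k) := by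
  simp [blockVec, dotProduct, Fintype.sum_prod_type, ite_mul]

end BlockVec

theorem blockVec_vecMul_blockP {m n : ℕ} (a : Fin m → Fin n → ℝ) (i : Fin m) (w : Fin n → ℝ) :
    blockVec i w ᵥ* blockP a = blockVec i (w ᵥ* projMat (a i)) := by
  funext q
  rw [vecMul, blockVec_dotProduct]
  by_cases hq : q.1 = i
  · simp [blockVec, blockP, hq, vecMul, dotProduct]
  · simp [blockVec, blockP, hq, Ne.symm hq, dotProduct]

/-- If the initial vector `𝒳₀` satisfies `aᵢᵀxᵢ(0) = bᵢ` for all `i`, then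
for every `t` the solution `𝒳(t) = exp(-t·P L̄)·𝒳₀` of the flow `𝒳̇ = -P L̄ 𝒳` satisfies
`aᵢᵀxᵢ(t) = bᵢ` for all `i`, i.e. the trajectory stays on the manifold `M`. -/
theorem flow_stays_on_manifold
    {n : ℕ} (A : Matrix (Fin n) (Fin n) ℝ) (b : Fin n → ℝ)
    (hrows : ∀ i, A i ≠ 0)
    (G : SimpleGraph (Fin n)) [DecidableRel G.Adj]
    (X0 : Fin n × Fin n → ℝ)
    (hX0 : ∀ i, A i ⬝ᵥ (fun k => X0 (i, k)) = b i)
    (t : ℝ) :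
    ∀ i, A i ⬝ᵥ (fun k =>
      (NormedSpace.exp
          ((-t) • (blockP (fun i => A i) * (G.lapMatrix ℝ ⊗ₖ (1 : Matrix (Fin n) (Fin n) ℝ))))
        *ᵥ X0) (i, k)) = b i := by
  intro i
  have hannihilates : blockVec i (A i) ᵥ*
      ((-t) • (blockP (fun i => A i) * (G.lapMatrix ℝ ⊗ₖ (1 : Matrix (Fin n) (Fin n) ℝ)))) = 0 := by
    rw [vecMul_smul, ← vecMul_vecMul, blockVec_vecMul_blockP, vecMul_projMat_self (hrows i),
      blockVec_zero, zero_vecMul, smul_zero]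
  rw [← blockVec_dotProduct, dotProduct_mulVec,
    vecMul_exp_eq_self_of_vecMul_eq_zero hannihilates, blockVec_dotProduct, hX0]
end

section
/- Let A be an invertible n×n real matrix with rows a₁ᵀ,…,aₙᵀ, let b ∈ ℝⁿ, and let x* = A⁻¹b. Let G be a connected undirected simple graph on n vertices with Laplacian L, let Pᵢ = I − aᵢaᵢᵀ/(aᵢᵀaᵢ), P = diag(P₁,…,Pₙ), and L̄ = L ⊗ Iₙ. Then for every initial vector 𝒳₀ = (x₁(0),…,xₙ(0)) ∈ (ℝⁿ)ⁿ with aᵢᵀxᵢ(0) = bᵢ for all i, there exist constants C ≥ 0 and c > 0 such that for all t ≥ 0, ‖exp(−t·P L̄)·𝒳₀ − (x*,x*,…,x*)‖ ≤ C·exp(−c·t); in particular each block xᵢ(t) of exp(−t·P L̄)·𝒳₀ converges exponentially fast to the solution x* of Ax = b. -/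
open Matrix
open scoped Kronecker

/-!
Let `X* = (x*,…,x*)`. Every block of `X*` is the same vector, so `L̄ X* = 0` and the flow fixes
`X*`; and `Y₀ = X₀ - X*` has blocks with `aᵢᵀ yᵢ = 0`, so `P Y₀ = Y₀`. As `P² = P`, the flow
`exp(-t P L̄)` agrees on the range of `P` with `exp(-t S)` for the symmetric positive semidefinite
`S = P L̄ P`. The vector `Y₀` is orthogonal to `ker S`: if `S u = 0` then `L̄ (P u) = 0`, so by
connectivity all blocks of `P u` equal one vector `w`; the block of index `i` is orthogonal to
`aᵢ`, hence `A w = 0` and `P u = 0`. Expanding `Y₀` in an orthonormal eigenbasis of `S`, only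
eigenvalues `μ ≥ c > 0` contribute, which gives the rate `e^{-ct}`.
-/

section Exponential

open NormedSpace
open scoped Matrix.Norms.Operator

variable {ι : Type*} [Fintype ι] [DecidableEq ι]

theorem Matrix.exp_mulVec_of_mulVec_eq_smul {M : Matrix ι ι ℝ} {v : ι → ℝ} {μ : ℝ}
    (h : M *ᵥ v = μ • v) : exp M *ᵥ v = Real.exp μ • v := by
  have hpow (k : ℕ) : M ^ k *ᵥ v = μ ^ k • v := by
    induction k with
    | zero => simp
    | succ k ih => rw [pow_succ', ← mulVec_mulVec, ih, mulVec_smul, h, smul_smul, pow_succ]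
  let evalAt : Matrix ι ι ℝ →ₗ[ℝ] (ι → ℝ) :=
    { toFun := (· *ᵥ v)
      map_add' := fun _ _ => add_mulVec _ _ _
      map_smul' := fun _ _ => smul_mulVec _ _ _ }
  have hmap := evalAt.toContinuousLinearMap.map_tsum (expSeries_summable' (𝕂 := ℝ) M)
  simp only [LinearMap.coe_toContinuousLinearMap', LinearMap.coe_mk, AddHom.coe_mk, evalAt,
    smul_mulVec, hpow, smul_smul] at hmap
  rw [exp_eq_tsum ℝ, hmap, Real.exp_eq_exp_ℝ, exp_eq_tsum ℝ]
  exact (expSeries_summable' (𝕂 := ℝ) μ).tsum_smul_const v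

theorem Matrix.exp_mul_mulVec_eq_exp_mul_mul_mulVec {P : Matrix ι ι ℝ} (hP : IsIdempotentElem P)
    (L : Matrix ι ι ℝ) {y : ι → ℝ} (hy : P *ᵥ y = y) :
    exp (P * L) *ᵥ y = exp (P * L * P) *ᵥ y := by
  have hPS : P * (P * L * P) = P * L * P := by rw [← mul_assoc, ← mul_assoc, hP.eq]
  have hSP : P * L * P * P = P * L * P := by rw [mul_assoc, hP.eq]
  have hsemiconj : SemiconjBy P (exp (P * L * P)) (exp (P * L)) := SemiconjBy.exp_right hPS
  have hcomm : Commute P (exp (P * L * P)) := Commute.exp_right (hPS.trans hSP.symm)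
  calc exp (P * L) *ᵥ y = (exp (P * L) * P) *ᵥ y := by rw [← mulVec_mulVec, hy]
    _ = (exp (P * L * P) * P) *ᵥ y := by rw [← hsemiconj.eq, hcomm.eq]
    _ = exp (P * L * P) *ᵥ y := by rw [← mulVec_mulVec, hy]

theorem Matrix.exp_mulVec_of_mulVec_eq_zero {M : Matrix ι ι ℝ} {v : ι → ℝ} (h : M *ᵥ v = 0) :
    exp M *ᵥ v = v := by
  rw [exp_mulVec_of_mulVec_eq_smul (μ := 0) (by rw [h, zero_smul]), Real.exp_zero, one_smul]

end Exponential

theorem exists_pos_le_of_pos {ι : Type*} [Finite ι] (μ : ι → ℝ) :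
    ∃ c > 0, ∀ i, 0 < μ i → c ≤ μ i := by
  have := Fintype.ofFinite ι
  by_cases hpos : ∃ i, 0 < μ i
  · obtain ⟨j, hj, hmin⟩ := (Finset.univ.filter fun i => 0 < μ i).exists_min_image μ
      (by simpa [Finset.filter_nonempty_iff] using hpos)
    exact ⟨μ j, (Finset.mem_filter.mp hj).2, fun i hi => hmin i (by simpa using hi)⟩
  · push Not at hpos
    exact ⟨1, one_pos, fun i hi => ((hpos i).not_gt hi).elim⟩

namespace Matrix.IsHermitian

variable {ι : Type*} [Fintype ι] [DecidableEq ι] {S : Matrix ι ι ℝ} (hS : S.IsHermitian)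

theorem sum_dotProduct_eigenvectorBasis_smul (y : ι → ℝ) :
    ∑ i, (⇑(hS.eigenvectorBasis i) ⬝ᵥ y) • ⇑(hS.eigenvectorBasis i) = y := by
  have := congrArg WithLp.ofLp (hS.eigenvectorBasis.sum_repr' (WithLp.toLp 2 y))
  simpa [EuclideanSpace.inner_eq_star_dotProduct, dotProduct_comm] using this

theorem exp_smul_mulVec (s : ℝ) (y : ι → ℝ) :
    NormedSpace.exp (s • S) *ᵥ y = ∑ i, (Real.exp (s * hS.eigenvalues i) *
      (⇑(hS.eigenvectorBasis i) ⬝ᵥ y)) • ⇑(hS.eigenvectorBasis i) := by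
  conv_lhs => rw [← hS.sum_dotProduct_eigenvectorBasis_smul y]
  simp only [mulVec_sum, mulVec_smul, mul_smul]
  refine Finset.sum_congr rfl fun i _ => ?_
  rw [Matrix.exp_mulVec_of_mulVec_eq_smul (μ := s * hS.eigenvalues i)
    (by rw [smul_mulVec, hS.mulVec_eigenvectorBasis, smul_smul]), smul_comm]

end Matrix.IsHermitian

theorem Matrix.PosSemidef.exists_norm_exp_neg_smul_mulVec_le {ι : Type*} [Fintype ι]
    [DecidableEq ι] {S : Matrix ι ι ℝ} (hS : S.PosSemidef) {y : ι → ℝ}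
    (hy : ∀ u, S *ᵥ u = 0 → u ⬝ᵥ y = 0) :
    ∃ C c : ℝ, 0 ≤ C ∧ 0 < c ∧ ∀ t : ℝ, 0 ≤ t →
      ‖NormedSpace.exp ((-t) • S) *ᵥ y‖ ≤ C * Real.exp (-c * t) := by
  set v : ι → ι → ℝ := fun i => ⇑(hS.isHermitian.eigenvectorBasis i)
  set μ := hS.isHermitian.eigenvalues
  have hkernel (i : ι) (hi : μ i = 0) : v i ⬝ᵥ y = 0 :=
    hy _ (by rw [hS.isHermitian.mulVec_eigenvectorBasis, show hS.isHermitian.eigenvalues i = 0 from hi, zero_smul])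
  obtain ⟨c, hc, hcμ⟩ := exists_pos_le_of_pos μ
  refine ⟨∑ i, |v i ⬝ᵥ y| * ‖v i‖, c, by positivity, hc, fun t ht => ?_⟩
  have hterm (i : ι) : ‖(Real.exp (-t * μ i) * (v i ⬝ᵥ y)) • v i‖
      ≤ |v i ⬝ᵥ y| * ‖v i‖ * Real.exp (-c * t) := by
    rcases (hS.eigenvalues_nonneg i).eq_or_lt with hzero | hpos
    · rw [hkernel i hzero.symm, mul_zero, zero_smul, norm_zero]
      positivity
    · calc _ = |v i ⬝ᵥ y| * ‖v i‖ * Real.exp (-t * μ i) := by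
            rw [norm_smul, norm_mul, Real.norm_eq_abs, Real.norm_eq_abs, Real.abs_exp]; ring
        _ ≤ _ := by
          gcongr |v i ⬝ᵥ y| * ‖v i‖ * ?_
          exact Real.exp_le_exp.mpr (by nlinarith [hcμ i hpos])
  calc ‖NormedSpace.exp ((-t) • S) *ᵥ y‖
      = ‖∑ i, (Real.exp (-t * μ i) * (v i ⬝ᵥ y)) • v i‖ := by rw [hS.isHermitian.exp_smul_mulVec]
    _ ≤ ∑ i, |v i ⬝ᵥ y| * ‖v i‖ * Real.exp (-c * t) := (norm_sum_le _ _).trans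
        (Finset.sum_le_sum fun i _ => hterm i)
    _ = _ := (Finset.sum_mul ..).symm

section Projection

variable {n : ℕ} (a : Fin n → ℝ)

theorem projMat_mulVec (y : Fin n → ℝ) :
    projMat a *ᵥ y = y - ((a ⬝ᵥ a)⁻¹ * (a ⬝ᵥ y)) • a := by
  rw [projMat, sub_mulVec, one_mulVec, smul_mulVec, vecMulVec_mulVec, op_smul_eq_smul, smul_smul]

theorem projMat_mulVec_of_dotProduct_eq_zero {y : Fin n → ℝ} (h : a ⬝ᵥ y = 0) :
    projMat a *ᵥ y = y := by
  rw [projMat_mulVec, h, mul_zero, zero_smul, sub_zero]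

theorem dotProduct_projMat_mulVec (y : Fin n → ℝ) : a ⬝ᵥ (projMat a *ᵥ y) = 0 := by
  rcases eq_or_ne (a ⬝ᵥ a) 0 with ha | ha
  · simp [dotProduct_self_eq_zero.mp ha]
  · rw [projMat_mulVec, dotProduct_sub, dotProduct_smul, smul_eq_mul, mul_right_comm,
      inv_mul_cancel₀ ha, one_mul, sub_self]

theorem projMat_transpose : (projMat a)ᵀ = projMat a := by
  rw [projMat, transpose_sub, transpose_one, transpose_smul, transpose_vecMulVec]

end Projection

section Block

variable {m n : ℕ} (a : Fin m → Fin n → ℝ)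

theorem blockP_mulVec_apply (x : Fin m × Fin n → ℝ) (i : Fin m) (k : Fin n) :
    (blockP a *ᵥ x) (i, k) = (projMat (a i) *ᵥ fun l => x (i, l)) k := by
  simp only [mulVec, dotProduct, blockP, of_apply, ite_mul, zero_mul, Fintype.sum_prod_type,
    Finset.sum_ite_irrel, Finset.sum_const_zero, Finset.sum_ite_eq, Finset.mem_univ, ↓reduceIte]

theorem dotProduct_blockP_mulVec (x : Fin m × Fin n → ℝ) (i : Fin m) :
    a i ⬝ᵥ (fun k => (blockP a *ᵥ x) (i, k)) = 0 := by
  simp only [blockP_mulVec_apply]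
  exact dotProduct_projMat_mulVec _ _

theorem blockP_mulVec_of_forall_dotProduct_eq_zero {x : Fin m × Fin n → ℝ}
    (h : ∀ i, a i ⬝ᵥ (fun k => x (i, k)) = 0) : blockP a *ᵥ x = x := by
  ext ⟨i, k⟩
  rw [blockP_mulVec_apply, projMat_mulVec_of_dotProduct_eq_zero _ (h i)]

theorem isStarProjection_blockP : IsStarProjection (blockP a) := by
  refine ⟨?_, ?_⟩
  · refine ext_iff_mulVec.mpr fun x => ?_
    rw [← mulVec_mulVec]
    exact blockP_mulVec_of_forall_dotProduct_eq_zero a (dotProduct_blockP_mulVec a x)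
  · rw [IsSelfAdjoint, star_eq_conjTranspose, conjTranspose_eq_transpose_of_trivial]
    ext ⟨i, k⟩ ⟨j, l⟩
    rcases eq_or_ne i j with rfl | hij
    · simpa [blockP] using congrFun (congrFun (projMat_transpose (a i)) k) l
    · simp [blockP, hij, hij.symm]

theorem blockP_mulVec_sub_const {x : Fin m × Fin n → ℝ} {w : Fin n → ℝ}
    (h : ∀ i, a i ⬝ᵥ (fun k => x (i, k)) = a i ⬝ᵥ w) :
    blockP a *ᵥ (x - fun p => w p.2) = x - fun p => w p.2 :=
  blockP_mulVec_of_forall_dotProduct_eq_zero a fun i =>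
    (dotProduct_sub (a i) (fun k => x (i, k)) w).trans (sub_eq_zero.mpr (h i))

end Block

open scoped ComplexOrder in
theorem Matrix.PosSemidef.mulVec_mulVec_eq_zero_of_conj_mulVec_eq_zero {𝕜 ι : Type*} [RCLike 𝕜]
    [Fintype ι] {L P : Matrix ι ι 𝕜} (hL : L.PosSemidef) {u : ι → 𝕜}
    (h : (Pᴴ * L * P) *ᵥ u = 0) : L *ᵥ (P *ᵥ u) = 0 := by
  refine (hL.dotProduct_mulVec_zero_iff (P *ᵥ u)).mp ?_
  rw [star_mulVec, ← dotProduct_mulVec, mulVec_mulVec, mulVec_mulVec, h, dotProduct_zero]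

theorem Matrix.kronecker_one_mulVec_apply {R m ι : Type*} [CommSemiring R] [Fintype m]
    [Fintype ι] [DecidableEq ι] (L : Matrix m m R) (x : m × ι → R) (i : m) (k : ι) :
    ((L ⊗ₖ (1 : Matrix ι ι R)) *ᵥ x) (i, k) = (L *ᵥ fun j => x (j, k)) i := by
  simp only [mulVec, dotProduct, Fintype.sum_prod_type, kroneckerMap_apply, one_apply, mul_ite,
    mul_one, mul_zero, ite_mul, zero_mul, Finset.sum_ite_eq, Finset.mem_univ, if_true]

namespace SimpleGraph

variable {V ι : Type*} [Fintype V] [DecidableEq V] [Fintype ι] [DecidableEq ι]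
  (G : SimpleGraph V) [DecidableRel G.Adj]

theorem lapMatrix_kronecker_one_mulVec_const (w : ι → ℝ) :
    (G.lapMatrix ℝ ⊗ₖ (1 : Matrix ι ι ℝ)) *ᵥ (fun p => w p.2) = 0 := by
  ext ⟨i, k⟩
  rw [kronecker_one_mulVec_apply,
    (G.lapMatrix_mulVec_eq_zero_iff_forall_reachable).mpr fun _ _ _ => rfl]
  rfl

theorem apply_eq_of_lapMatrix_kronecker_one_mulVec_eq_zero (hG : G.Connected)
    {x : V × ι → ℝ} (hx : (G.lapMatrix ℝ ⊗ₖ (1 : Matrix ι ι ℝ)) *ᵥ x = 0) (i j : V) (k : ι) :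
    x (i, k) = x (j, k) := by
  have hslice : G.lapMatrix ℝ *ᵥ (fun l => x (l, k)) = 0 := by
    ext l
    rw [← kronecker_one_mulVec_apply, hx, Pi.zero_apply, Pi.zero_apply]
  exact (G.lapMatrix_mulVec_eq_zero_iff_forall_reachable.mp hslice) i j (hG.preconnected i j)

end SimpleGraph

theorem blockP_mulVec_eq_zero_of_lapMatrix_kronecker_one_mulVec_eq_zero {m n : ℕ}
    {A : Matrix (Fin m) (Fin n) ℝ} (hA : Function.Injective A.mulVec) {G : SimpleGraph (Fin m)}
    [DecidableRel G.Adj] (hG : G.Connected) {x : Fin m × Fin n → ℝ}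
    (hx : (G.lapMatrix ℝ ⊗ₖ (1 : Matrix (Fin n) (Fin n) ℝ)) *ᵥ (blockP (fun i => A i) *ᵥ x) = 0) :
    blockP (fun i => A i) *ᵥ x = 0 := by
  set y := blockP (fun i => A i) *ᵥ x
  have hconsensus := G.apply_eq_of_lapMatrix_kronecker_one_mulVec_eq_zero hG hx
  ext ⟨i, k⟩
  have hslice : A *ᵥ (fun l => y (i, l)) = 0 := by
    ext j
    simp only [mulVec, Pi.zero_apply, hconsensus i j]
    exact dotProduct_blockP_mulVec (fun i => A i) x j
  have hzero : (fun l => y (i, l)) = 0 := hA (by rw [hslice, mulVec_zero])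
  exact congrFun hzero k

/-- For an invertible `A`, a connected graph `G`, and any initial vector
`𝒳₀` with `aᵢᵀxᵢ(0) = bᵢ` for all `i`, the solution `𝒳(t) = exp(-t·P L̄)·𝒳₀` of the flow
`𝒳̇ = -P L̄ 𝒳` converges exponentially fast to `(x*,…,x*)` where `x* = A⁻¹b`. -/
theorem flow_converges_exponentially
    {n : ℕ} (A : Matrix (Fin n) (Fin n) ℝ) (hA : IsUnit A.det) (b : Fin n → ℝ)
    (G : SimpleGraph (Fin n)) [DecidableRel G.Adj] (hG : G.Connected)
    (X0 : Fin n × Fin n → ℝ)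
    (hX0 : ∀ i, A i ⬝ᵥ (fun k => X0 (i, k)) = b i) :
    ∃ C c : ℝ, 0 ≤ C ∧ 0 < c ∧ ∀ t : ℝ, 0 ≤ t →
      ‖(NormedSpace.exp
            ((-t) • (blockP (fun i => A i) * (G.lapMatrix ℝ ⊗ₖ (1 : Matrix (Fin n) (Fin n) ℝ))))
          *ᵥ X0)
        - (fun p => (A⁻¹ *ᵥ b) p.2)‖ ≤ C * Real.exp (-c * t) := by
  set P := blockP fun i => A i
  set Lb := G.lapMatrix ℝ ⊗ₖ (1 : Matrix (Fin n) (Fin n) ℝ)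
  set Xs : Fin n × Fin n → ℝ := fun p => (A⁻¹ *ᵥ b) p.2
  have hP : IsStarProjection P := isStarProjection_blockP _
  have hPadj : Pᴴ = P := hP.isSelfAdjoint
  have hLb : Lb.PosSemidef := (G.posSemidef_lapMatrix ℝ).kronecker PosSemidef.one
  have hPY : P *ᵥ (X0 - Xs) = X0 - Xs := by
    have hxs : A *ᵥ (A⁻¹ *ᵥ b) = b := by rw [mulVec_mulVec, mul_nonsing_inv A hA, one_mulVec]
    exact blockP_mulVec_sub_const _ fun i => (hX0 i).trans (congrFun hxs i).symm
  have hker (u) (hu : (P * Lb * P) *ᵥ u = 0) : u ⬝ᵥ (X0 - Xs) = 0 := by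
    have hPu : P *ᵥ u = 0 :=
      blockP_mulVec_eq_zero_of_lapMatrix_kronecker_one_mulVec_eq_zero
        (mulVec_injective_iff_isUnit.mpr ((isUnit_iff_isUnit_det A).mpr hA)) hG
        (hLb.mulVec_mulVec_eq_zero_of_conj_mulVec_eq_zero (by rwa [hPadj]))
    rw [← hPY, dotProduct_mulVec, ← mulVec_transpose, ← conjTranspose_eq_transpose_of_trivial,
      hPadj, hPu, zero_dotProduct]
  have hS : (P * Lb * P).PosSemidef := by simpa only [hPadj] using hLb.conjTranspose_mul_mul_same P
  obtain ⟨C, c, hC, hc, hdecay⟩ := hS.exists_norm_exp_neg_smul_mulVec_le hker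
  refine ⟨C, c, hC, hc, fun t ht => ?_⟩
  have hfix : NormedSpace.exp ((-t) • (P * Lb)) *ᵥ Xs = Xs := exp_mulVec_of_mulVec_eq_zero <| by
    rw [smul_mulVec, ← mulVec_mulVec, G.lapMatrix_kronecker_one_mulVec_const, mulVec_zero,
      smul_zero]
  have hflow : NormedSpace.exp ((-t) • (P * Lb)) *ᵥ (X0 - Xs)
      = NormedSpace.exp ((-t) • (P * Lb * P)) *ᵥ (X0 - Xs) := by
    simpa only [mul_smul_comm, smul_mul_assoc] using
      exp_mul_mulVec_eq_exp_mul_mul_mulVec hP.isIdempotentElem ((-t) • Lb) hPY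
  calc _ = ‖NormedSpace.exp ((-t) • (P * Lb * P)) *ᵥ (X0 - Xs)‖ := by
        rw [← hflow, mulVec_sub, hfix]
    _ ≤ C * Real.exp (-c * t) := hdecay t ht
end

section
/- Let P be a real n²×n² idempotent matrix (P² = P) and let L̄ be any real n²×n² matrix. Then the characteristic polynomial of P L̄ + I − P equals the characteristic polynomial of P L̄ P + I − P; in particular P L̄ + I − P and P L̄ P + I − P have the same eigenvalues. -/
/-!
With `M := L̄ - 1` the two matrices are `P M + 1` and `P M P + 1`, since `P M P = P L̄ P - P`.
Shifting by the identity acts on characteristic polynomials by `X ↦ X - 1`, so it suffices that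
`P M` and `P M P` have the same characteristic polynomial. That is the identity
`χ(AB) = χ(BA)` for `A = P M`, `B = P`, because `P (P M) = P M`.
-/

open Polynomial

namespace Matrix

variable {ι R : Type*} [Fintype ι] [DecidableEq ι] [CommRing R]

theorem charpoly_add_one (M : Matrix ι ι R) :
    (M + 1).charpoly = M.charpoly.comp (X - 1) := by
  simpa [sub_eq_add_neg] using charpoly_sub_scalar M (-1)

theorem charpoly_mul_mul_self_of_isIdempotentElem {P : Matrix ι ι R} (hP : IsIdempotentElem P)
    (M : Matrix ι ι R) : (P * M * P).charpoly = (P * M).charpoly := by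
  rw [charpoly_mul_comm, ← Matrix.mul_assoc, hP.eq]

theorem charpoly_mul_add_one_sub_of_isIdempotentElem {P : Matrix ι ι R}
    (hP : IsIdempotentElem P) (L : Matrix ι ι R) :
    (P * L + 1 - P).charpoly = (P * L * P + 1 - P).charpoly := by
  have hleft : P * L + 1 - P = P * (L - 1) + 1 := by noncomm_ring
  have hright : P * L * P + 1 - P = P * (L - 1) * P + 1 := by
    rw [Matrix.mul_sub, Matrix.sub_mul, Matrix.mul_one, hP.eq]
    abel
  rw [hleft, hright, charpoly_add_one, charpoly_add_one,
    charpoly_mul_mul_self_of_isIdempotentElem hP]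

end Matrix

/-- If `P` is an idempotent real `n²×n²` matrix and `L̄` is any real `n²×n²`
matrix, then `P L̄ + I - P` and `P L̄ P + I - P` have the same characteristic polynomial,
and hence the same (complex) eigenvalues. -/
theorem charpoly_proj_shift {n : ℕ}
    (P Lbar : Matrix (Fin (n ^ 2)) (Fin (n ^ 2)) ℝ) (hP : P * P = P) :
    (P * Lbar + 1 - P).charpoly = (P * Lbar * P + 1 - P).charpoly ∧
    ∀ μ : ℂ,
      (((P * Lbar + 1 - P).map (algebraMap ℝ ℂ)).charpoly.IsRoot μ ↔
        ((P * Lbar * P + 1 - P).map (algebraMap ℝ ℂ)).charpoly.IsRoot μ) := by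
  have h := Matrix.charpoly_mul_add_one_sub_of_isIdempotentElem hP Lbar
  refine ⟨h, fun μ => ?_⟩
  rw [Matrix.charpoly_map, Matrix.charpoly_map, h]
end

section
/- Let a₁,…,aₙ be nonzero vectors in ℝⁿ, let G be an undirected simple graph on n vertices with Laplacian L, let Pᵢ = I − aᵢaᵢᵀ/(aᵢᵀaᵢ), P = diag(P₁,…,Pₙ), and L̄ = L ⊗ Iₙ. Then the characteristic polynomial of P L̄ equals the characteristic polynomial of the symmetric positive semidefinite matrix P L̄ P; consequently every complex eigenvalue of P L̄ is real and nonnegative. -/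
open Matrix
open scoped Kronecker

/-!
Since `P` is idempotent, `P L̄ = P (P L̄)`, and `AB` and `BA` have the same characteristic
polynomial, so `P L̄` and `P L̄ P` do. As `P` is symmetric and `L̄ = L ⊗ I` is positive
semidefinite, `P L̄ P = Pᵀ L̄ P` is positive semidefinite; its characteristic polynomial is
`∏ (X - λᵢ)` over its (real, nonnegative) eigenvalues `λᵢ`, so it has no other complex roots.
-/

open Polynomial
open scoped ComplexOrder

namespace Matrix

variable {ι : Type*} [Fintype ι] [DecidableEq ι]

theorem charpoly_mul_eq_charpoly_mul_mul_of_isIdempotentElem {R : Type*} [CommRing R]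
    {P : Matrix ι ι R} (hP : IsIdempotentElem P) (L : Matrix ι ι R) :
    (P * L).charpoly = (P * L * P).charpoly := by
  conv_lhs => rw [← hP.eq, Matrix.mul_assoc]
  exact charpoly_mul_comm _ _

theorem PosSemidef.nonneg_of_isRoot_charpoly_map {S : Matrix ι ι ℝ} (hS : S.PosSemidef) {μ : ℂ}
    (hμ : (S.map (algebraMap ℝ ℂ)).charpoly.IsRoot μ) : 0 ≤ μ := by
  rw [charpoly_map, hS.isHermitian.charpoly_eq, Polynomial.map_prod, IsRoot, eval_prod,
    Finset.prod_eq_zero_iff] at hμ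
  obtain ⟨i, -, hi⟩ := hμ
  rw [Polynomial.map_sub, map_X, map_C, eval_sub, eval_X, eval_C, sub_eq_zero] at hi
  rw [hi]
  simpa using hS.eigenvalues_nonneg i

end Matrix

theorem projMat_isSymm {n : ℕ} (a : Fin n → ℝ) : (projMat a).IsSymm := by
  simp [projMat, IsSymm, transpose_sub, transpose_smul]

theorem isIdempotentElem_projMat {n : ℕ} {a : Fin n → ℝ} (ha : a ≠ 0) :
    IsIdempotentElem (projMat a) := by
  refine IsIdempotentElem.one_sub ?_
  have haa : a ⬝ᵥ a ≠ 0 := fun h => ha (dotProduct_self_eq_zero.mp h)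
  rw [IsIdempotentElem, smul_mul_smul, vecMulVec_mul_vecMulVec, vecMulVec_smul, smul_smul,
    mul_assoc, inv_mul_cancel₀ haa, mul_one]

theorem blockP_eq_submatrix_blockDiagonal {m n : ℕ} (a : Fin m → Fin n → ℝ) :
    blockP a = (blockDiagonal fun i => projMat (a i)).submatrix
      (Equiv.prodComm (Fin m) (Fin n)) (Equiv.prodComm (Fin m) (Fin n)) := by
  ext ⟨i, k⟩ ⟨j, l⟩
  simp [blockP, blockDiagonal_apply]

theorem blockP_isSymm {m n : ℕ} (a : Fin m → Fin n → ℝ) : (blockP a).IsSymm := by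
  simp only [IsSymm, blockP_eq_submatrix_blockDiagonal, transpose_submatrix,
    blockDiagonal_transpose, (projMat_isSymm _).eq]

theorem isIdempotentElem_blockP {m n : ℕ} {a : Fin m → Fin n → ℝ} (ha : ∀ i, a i ≠ 0) :
    IsIdempotentElem (blockP a) := by
  rw [IsIdempotentElem, blockP_eq_submatrix_blockDiagonal, submatrix_mul_equiv,
    ← blockDiagonal_mul]
  simp only [(isIdempotentElem_projMat (ha _)).eq]

/-- For nonzero `a₁,…,aₙ` and any simple graph `G` on `n` vertices, the
characteristic polynomial of `P L̄` equals that of the symmetric positive semidefinite matrix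
`P L̄ P`; consequently every complex eigenvalue of `P L̄` is real and nonnegative. -/
theorem charpoly_PL_eq_PLP
    {n : ℕ} (a : Fin n → Fin n → ℝ) (ha : ∀ i, a i ≠ 0)
    (G : SimpleGraph (Fin n)) [DecidableRel G.Adj] :
    (blockP a * (G.lapMatrix ℝ ⊗ₖ (1 : Matrix (Fin n) (Fin n) ℝ))).charpoly =
      (blockP a * (G.lapMatrix ℝ ⊗ₖ (1 : Matrix (Fin n) (Fin n) ℝ)) * blockP a).charpoly ∧
    ((blockP a * (G.lapMatrix ℝ ⊗ₖ (1 : Matrix (Fin n) (Fin n) ℝ))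
        * blockP a).IsSymm ∧
      (blockP a * (G.lapMatrix ℝ ⊗ₖ (1 : Matrix (Fin n) (Fin n) ℝ))
        * blockP a).PosSemidef) ∧
    ∀ μ : ℂ,
      ((blockP a * (G.lapMatrix ℝ ⊗ₖ (1 : Matrix (Fin n) (Fin n) ℝ))).map
        (algebraMap ℝ ℂ)).charpoly.IsRoot μ →
      μ.im = 0 ∧ 0 ≤ μ.re := by
  have hL : (G.lapMatrix ℝ ⊗ₖ (1 : Matrix (Fin n) (Fin n) ℝ)).PosSemidef :=
    (G.posSemidef_lapMatrix ℝ).kronecker PosSemidef.one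
  have hPLP := hL.conjTranspose_mul_mul_same (blockP a)
  rw [conjTranspose_eq_transpose_of_trivial, (blockP_isSymm a).eq] at hPLP
  have hcharpoly := charpoly_mul_eq_charpoly_mul_mul_of_isIdempotentElem
    (isIdempotentElem_blockP ha) (G.lapMatrix ℝ ⊗ₖ 1)
  refine ⟨hcharpoly, ⟨isHermitian_iff_isSymm.mp hPLP.isHermitian, hPLP⟩, fun μ hμ => ?_⟩
  rw [charpoly_map, hcharpoly, ← charpoly_map] at hμ
  obtain ⟨hre, him⟩ := Complex.nonneg_iff.mp (hPLP.nonneg_of_isRoot_charpoly_map hμ)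
  exact ⟨him.symm, hre⟩
end
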